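/- arXiv:2202.00870 — 9 statements merged into one kernel-verified Lean document; each statement's English description precedes it below -/
import Mathlib

section
/- The sequence defined by a_0 = 1+d and a_{i+1} = 1+d - p/(1+a_i), with d > 0 and 0 < p < 1, converges to a_∞ = (d + sqrt(d^2 + 4(1+d-p)))/2. -/
/-! The map `x ↦ 1 + d - p / (1 + x)` is increasing on `x > -1`, and its fixed points there are
the roots of `x ^ 2 = d * x + (1 + d - p)`. The sequence starts above the larger root `L` and
its first step goes down, so monotonicity of the map keeps it decreasing and bounded below by `L`;
its limit is a fixed point `≥ L`, hence `L` itself. -/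

open Filter Topology Set

theorem tendsto_fixedPt_of_monotoneOn_Ici {f : ℝ → ℝ} {a : ℕ → ℝ} {L : ℝ}
    (hmono : MonotoneOn f (Ici L)) (hcont : ContinuousOn f (Ici L)) (hL : f L = L)
    (huniq : ∀ x, L ≤ x → f x = x → x = L) (ha : ∀ n, a (n + 1) = f (a n))
    (h0 : L ≤ a 0) (h1 : a 1 ≤ a 0) : Tendsto a atTop (𝓝 L) := by
  have hlow : ∀ n, L ≤ a n := by
    intro n
    induction n with
    | zero => exact h0
    | succ n ih => rw [ha, ← hL]; exact hmono self_mem_Ici ih ih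
  have hanti : Antitone a := by
    refine antitone_nat_of_succ_le fun n => ?_
    induction n with
    | zero => exact h1
    | succ n ih => exact (ha _).trans_le ((hmono (hlow _) (hlow _) ih).trans_eq (ha n).symm)
  have hbdd : BddBelow (range a) := ⟨L, forall_mem_range.2 hlow⟩
  have hlim := tendsto_atTop_ciInf hanti hbdd
  have hc : L ≤ ⨅ n, a n := le_ciInf hlow
  have hfix : f (⨅ n, a n) = ⨅ n, a n := by
    have hfa : Tendsto (fun n => f (a n)) atTop (𝓝 (f (⨅ n, a n))) :=
      (hcont _ hc).tendsto.comp
        (tendsto_nhdsWithin_iff.2 ⟨hlim, Eventually.of_forall hlow⟩)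
    exact tendsto_nhds_unique hfa <| (hlim.comp (tendsto_add_atTop_nat 1)).congr fun n => ha n
  rwa [← huniq _ hc hfix]

noncomputable def largerRoot (d q : ℝ) : ℝ := (d + √(d ^ 2 + 4 * q)) / 2

section LargerRoot

variable {d q x : ℝ}

lemma half_le_largerRoot : d / 2 ≤ largerRoot d q := by
  unfold largerRoot
  linarith [Real.sqrt_nonneg (d ^ 2 + 4 * q)]

lemma largerRoot_sq (hq : 0 ≤ d ^ 2 + 4 * q) :
    largerRoot d q ^ 2 = d * largerRoot d q + q := by
  unfold largerRoot
  nlinarith [Real.sq_sqrt hq]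

lemma largerRoot_pos (hq : 0 < q) : 0 < largerRoot d q := by
  have hs := Real.sq_sqrt (by positivity : 0 ≤ d ^ 2 + 4 * q)
  unfold largerRoot
  nlinarith [Real.sqrt_nonneg (d ^ 2 + 4 * q)]

lemma eq_largerRoot_of_sq_eq (hq : 0 ≤ d ^ 2 + 4 * q) (hx : x ^ 2 = d * x + q)
    (hle : largerRoot d q ≤ x) : x = largerRoot d q := by
  have hL := largerRoot_sq hq
  have := half_le_largerRoot (d := d) (q := q)
  nlinarith

lemma largerRoot_le (hq : 0 ≤ d ^ 2 + 4 * q) (hx : d / 2 ≤ x) (h : d * x + q ≤ x ^ 2) :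
    largerRoot d q ≤ x := by
  have hL := largerRoot_sq hq
  have := half_le_largerRoot (d := d) (q := q)
  nlinarith

end LargerRoot

section ConstSubDivOneAdd

variable {d p x b : ℝ}

lemma const_sub_div_one_add_eq_self_iff (hx : 1 + x ≠ 0) :
    1 + d - p / (1 + x) = x ↔ x ^ 2 = d * x + (1 + d - p) := by
  rw [sub_eq_iff_eq_add, ← sub_eq_iff_eq_add', eq_comm, div_eq_iff hx]
  constructor <;> intro h <;> linear_combination h

lemma monotoneOn_const_sub_div_one_add (hp : 0 ≤ p) (hb : -1 < b) :
    MonotoneOn (fun x => 1 + d - p / (1 + x)) (Ici b) := fun x hx y _ hxy => by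
  have : p / (1 + y) ≤ p / (1 + x) :=
    div_le_div_of_nonneg_left hp (by linarith [mem_Ici.1 hx]) (by linarith)
  dsimp only
  linarith

lemma continuousOn_const_sub_div_one_add (hb : -1 < b) :
    ContinuousOn (fun x => 1 + d - p / (1 + x)) (Ici b) :=
  continuousOn_const.sub <| continuousOn_const.div (by fun_prop) fun x hx => by
    linarith [mem_Ici.1 hx]

end ConstSubDivOneAdd

theorem stmt_1 (d p : ℝ) (hd : 0 < d) (hp : 0 < p) (hp1 : p < 1)
    (a : ℕ → ℝ) (ha0 : a 0 = 1 + d)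
    (ha : ∀ i, a (i + 1) = 1 + d - p / (1 + a i)) :
    Filter.Tendsto a Filter.atTop
      (nhds ((d + Real.sqrt (d ^ 2 + 4 * (1 + d - p))) / 2)) := by
  set L := largerRoot d (1 + d - p)
  have hq : 0 ≤ d ^ 2 + 4 * (1 + d - p) := by nlinarith
  have hL : -1 < L := by linarith [largerRoot_pos (d := d) (by linarith : 0 < 1 + d - p)]
  have hne : ∀ x, L ≤ x → 1 + x ≠ 0 := fun x hx => by linarith
  have hfixL : 1 + d - p / (1 + L) = L :=
    (const_sub_div_one_add_eq_self_iff (hne L le_rfl)).2 (largerRoot_sq hq)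
  have huniq : ∀ x, L ≤ x → 1 + d - p / (1 + x) = x → x = L := fun x hx hfx =>
    eq_largerRoot_of_sq_eq hq ((const_sub_div_one_add_eq_self_iff (hne x hx)).1 hfx) hx
  refine tendsto_fixedPt_of_monotoneOn_Ici (monotoneOn_const_sub_div_one_add hp.le hL)
    (continuousOn_const_sub_div_one_add hL) hfixL huniq ha ?_ ?_
  · rw [ha0]
    exact largerRoot_le hq (by linarith) (by nlinarith)
  · rw [ha, ha0]
    have : 0 ≤ p / (1 + (1 + d)) := by positivity
    linarith
end

section
/- For the sequences a_0 = 1+d, a_{i+1} = 1+d - p/(1+a_i) and b_0 = 0, b_{i+1} = p(2 a_i ψ + b_i)/(1+a_i), with d > 0, p ∈ (0,1), ψ > 0, one has b_i < 2ψ for all i ≥ 0. -/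
/-! Both sequences are controlled by one-step invariants: `a i > 0` persists because
`p / (1 + a i) < 1 ≤ 1 + d`, and since `b (i+1)` is `p` times the weighted mean
`(a i · 2ψ + b i) / (1 + a i)` of `2ψ` and `b i`, it stays below `2ψ` once `b i` does. -/

lemma one_add_sub_div_one_add_pos {d p a : ℝ} (hd : 0 ≤ d) (hp : p ≤ 1) (ha : 0 < a) :
    0 < 1 + d - p / (1 + a) := by
  have : p / (1 + a) < 1 := (div_lt_one (by linarith)).2 (by linarith)
  linarith

lemma mul_add_div_one_add_lt {p a b c : ℝ} (hp : 0 < p) (hp1 : p ≤ 1) (hc : 0 ≤ c)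
    (ha : 0 < 1 + a) (hb : b < c) :
    p * (a * c + b) / (1 + a) < c := by
  rw [div_lt_iff₀ ha]
  calc p * (a * c + b) < p * ((1 + a) * c) := by gcongr; linarith
    _ ≤ (1 + a) * c := mul_le_of_le_one_left (by positivity) hp1
    _ = c * (1 + a) := mul_comm _ _

theorem stmt_4 (d p ψ : ℝ) (hd : 0 < d) (hp : 0 < p) (hp1 : p < 1) (hψ : 0 < ψ)
    (a b : ℕ → ℝ) (ha0 : a 0 = 1 + d)
    (ha : ∀ i, a (i + 1) = 1 + d - p / (1 + a i))
    (hb0 : b 0 = 0)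
    (hb : ∀ i, b (i + 1) = p * (2 * a i * ψ + b i) / (1 + a i)) :
    ∀ i, b i < 2 * ψ := by
  have ha_pos : ∀ i, 0 < a i := by
    intro i
    induction i with
    | zero => rw [ha0]; linarith
    | succ i ih => rw [ha i]; exact one_add_sub_div_one_add_pos hd.le hp1.le ih
  intro i
  induction i with
  | zero => rw [hb0]; positivity
  | succ i ih =>
    rw [hb i, show 2 * a i * ψ = a i * (2 * ψ) by ring]
    exact mul_add_div_one_add_lt hp hp1.le (by positivity) (by linarith [ha_pos i]) ih
end

section
/- The sequence b_0 = 0, b_{i+1} = p(2 a_i ψ + b_i)/(1+a_i), where a_i is the decreasing sequence a_0 = 1+d, a_{i+1} = 1+d - p/(1+a_i), converges to b_∞ = 2 p a_∞ ψ / (1 + a_∞ − p), where a_∞ = (d + sqrt(d^2+4(1+d−p)))/2. -/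
/-! Both recursions contract with factor `p`. The map `x ↦ 1 + d - p / (1 + x)` is `p`-Lipschitz
on `[0, ∞)`, and its fixed point there is the positive root `a∞` of `x² = d x + (1 + d - p)`.
Given `a_i`, the map `x ↦ p (2 a_i ψ + x) / (1 + a_i)` is again `p`-Lipschitz, and it differs
from its limit `x ↦ p (2 a∞ ψ + x) / (1 + a∞)`, whose fixed point is `b∞`, by `O(|a_i - a∞|)`.
So `|b_{i+1} - b∞| ≤ p |b_i - b∞| + ε_i` with `ε_i → 0`, which forces `b_i → b∞`. -/

open Filter Topology

theorem tendsto_zero_of_le_mul_add {u ε : ℕ → ℝ} {q : ℝ} (hq0 : 0 ≤ q) (hq1 : q < 1)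
    (hu0 : ∀ n, 0 ≤ u n) (hu : ∀ n, u (n + 1) ≤ q * u n + ε n)
    (hε : Tendsto ε atTop (𝓝 0)) : Tendsto u atTop (𝓝 0) := by
  rw [Metric.tendsto_atTop]
  intro δ hδ
  have hδq : 0 < δ / 2 * (1 - q) := by nlinarith
  obtain ⟨N, hN⟩ := eventually_atTop.1 (hε.eventually (gt_mem_nhds hδq))
  have hbound : ∀ k, u (N + k) ≤ q ^ k * u N + δ / 2 := by
    intro k
    induction k with
    | zero => simp only [add_zero, pow_zero, one_mul]; linarith
    | succ k ih =>
      calc u (N + (k + 1)) ≤ q * u (N + k) + ε (N + k) := hu (N + k)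
        _ ≤ q * (q ^ k * u N + δ / 2) + δ / 2 * (1 - q) := by
          gcongr
          exact (hN (N + k) (Nat.le_add_right N k)).le
        _ = q ^ (k + 1) * u N + δ / 2 := by ring
  have hgeom : Tendsto (fun k => q ^ k * u N) atTop (𝓝 0) := by
    simpa using (tendsto_pow_atTop_nhds_zero_of_lt_one hq0 hq1).mul_const (u N)
  obtain ⟨M, hM⟩ := eventually_atTop.1 (hgeom.eventually (gt_mem_nhds (half_pos hδ)))
  refine ⟨N + M, fun n hn => ?_⟩
  obtain ⟨k, rfl⟩ := Nat.exists_eq_add_of_le (le_trans (Nat.le_add_right N M) hn)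
  rw [Real.dist_eq, sub_zero, abs_of_nonneg (hu0 _)]
  linarith [hbound k, hM k (by omega)]

theorem abs_inv_one_add_sub_inv_one_add_le {x y : ℝ} (hx : 0 ≤ x) (hy : 0 ≤ y) :
    |(1 + x)⁻¹ - (1 + y)⁻¹| ≤ |x - y| := by
  have hxy : (1 + x)⁻¹ - (1 + y)⁻¹ = (y - x) / ((1 + x) * (1 + y)) := by
    field_simp
    ring
  rw [hxy, abs_div, abs_sub_comm y x, abs_of_pos (by positivity : 0 < (1 + x) * (1 + y))]
  exact div_le_self (abs_nonneg _) (by nlinarith)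

theorem root_eq_one_add_sub_div {d p L : ℝ} (hdp : 0 < 1 + d - p)
    (hL : L = (d + √(d ^ 2 + 4 * (1 + d - p))) / 2) : 0 < L ∧ L = 1 + d - p / (1 + L) := by
  set s := √(d ^ 2 + 4 * (1 + d - p))
  have hs2 : s ^ 2 = d ^ 2 + 4 * (1 + d - p) := Real.sq_sqrt (by nlinarith [sq_nonneg d])
  have hds : |d| < s := by
    rw [← Real.sqrt_sq_eq_abs]
    exact Real.sqrt_lt_sqrt (sq_nonneg d) (by linarith)
  have hLpos : 0 < L := by rw [hL]; linarith [neg_abs_le d]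
  refine ⟨hLpos, ?_⟩
  have hquad : L ^ 2 = d * L + (1 + d - p) := by rw [hL]; linear_combination hs2 / 4
  field_simp
  linear_combination hquad

section Recursion

variable {d p ψ L B : ℝ} {a b : ℕ → ℝ}

theorem nonneg_of_eq_one_add_sub_div (hp : 0 ≤ p) (hpd : p ≤ 1 + d) (ha0 : 0 ≤ a 0)
    (ha : ∀ i, a (i + 1) = 1 + d - p / (1 + a i)) (i : ℕ) : 0 ≤ a i := by
  induction i with
  | zero => exact ha0
  | succ i ih =>
    rw [ha i]
    linarith [div_le_self hp (by linarith : (1 : ℝ) ≤ 1 + a i)]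

theorem tendsto_of_eq_one_add_sub_div (hp : 0 ≤ p) (hp1 : p < 1) (ha_nonneg : ∀ i, 0 ≤ a i)
    (ha : ∀ i, a (i + 1) = 1 + d - p / (1 + a i)) (hL0 : 0 ≤ L)
    (hL : L = 1 + d - p / (1 + L)) : Tendsto a atTop (𝓝 L) := by
  have hcontr : ∀ i, |a (i + 1) - L| ≤ p * |a i - L| := by
    intro i
    have hdiff : a (i + 1) - L = p * ((1 + L)⁻¹ - (1 + a i)⁻¹) := by
      rw [ha i]
      linear_combination -hL
    rw [hdiff, abs_mul, abs_of_nonneg hp, abs_sub_comm (a i)]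
    exact mul_le_mul_of_nonneg_left (abs_inv_one_add_sub_inv_one_add_le hL0 (ha_nonneg i)) hp
  have hzero := tendsto_zero_of_le_mul_add (ε := 0) hp hp1 (fun i => abs_nonneg (a i - L))
    (fun i => by simpa using hcontr i) tendsto_const_nhds
  exact tendsto_iff_norm_sub_tendsto_zero.2 hzero

theorem tendsto_of_eq_mul_add_div (hp : 0 ≤ p) (hp1 : p < 1) (ha_nonneg : ∀ i, 0 ≤ a i)
    (ha_lim : Tendsto a atTop (𝓝 L)) (hL0 : 0 ≤ L)
    (hb : ∀ i, b (i + 1) = p * (2 * a i * ψ + b i) / (1 + a i))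
    (hB : B * (1 + L) = p * (2 * L * ψ + B)) : Tendsto b atTop (𝓝 B) := by
  have hstep : ∀ i, |b (i + 1) - B| ≤ p * |b i - B| + p * |B - 2 * ψ| * |a i - L| := by
    intro i
    have h1a : 0 < 1 + a i := by linarith [ha_nonneg i]
    -- `p (2 x ψ + y) / (1 + x) = p (2 ψ + (y - 2 ψ) / (1 + x))` splits the error in `b` and in `a`
    have hdiff : b (i + 1) - B =
        p * ((b i - B) * (1 + a i)⁻¹ + (B - 2 * ψ) * ((1 + a i)⁻¹ - (1 + L)⁻¹)) := by
      rw [hb i]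
      field_simp
      linear_combination (-(1 + a i)) * hB
    have hinv : |(1 + a i)⁻¹| ≤ 1 := by
      rw [abs_of_pos (inv_pos.2 h1a)]
      exact inv_le_one_of_one_le₀ (by linarith [ha_nonneg i])
    calc |b (i + 1) - B|
        ≤ p * (|b i - B| * |(1 + a i)⁻¹| + |B - 2 * ψ| * |(1 + a i)⁻¹ - (1 + L)⁻¹|) := by
          rw [hdiff, abs_mul, abs_of_nonneg hp, ← abs_mul, ← abs_mul]
          exact mul_le_mul_of_nonneg_left (abs_add_le _ _) hp
      _ ≤ p * (|b i - B| * 1 + |B - 2 * ψ| * |a i - L|) := by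
          gcongr p * (_ * ?_ + _ * ?_)
          exact abs_inv_one_add_sub_inv_one_add_le (ha_nonneg i) hL0
      _ = p * |b i - B| + p * |B - 2 * ψ| * |a i - L| := by ring
  have herr : Tendsto (fun i => p * |B - 2 * ψ| * |a i - L|) atTop (𝓝 0) := by
    simpa using (tendsto_iff_norm_sub_tendsto_zero.1 ha_lim).const_mul (p * |B - 2 * ψ|)
  exact tendsto_iff_norm_sub_tendsto_zero.2
    (tendsto_zero_of_le_mul_add hp hp1 (fun i => abs_nonneg _) hstep herr)

end Recursion

theorem stmt_5_general (d p ψ : ℝ) (hd : 0 < d) (hp : 0 < p) (hp1 : p < 1)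
    (a b : ℕ → ℝ) (ha0 : a 0 = 1 + d)
    (ha : ∀ i, a (i + 1) = 1 + d - p / (1 + a i))
    (hb : ∀ i, b (i + 1) = p * (2 * a i * ψ + b i) / (1 + a i)) :
    Filter.Tendsto b Filter.atTop
      (nhds (2 * p * ((d + Real.sqrt (d ^ 2 + 4 * (1 + d - p))) / 2) * ψ /
        (1 + (d + Real.sqrt (d ^ 2 + 4 * (1 + d - p))) / 2 - p))) := by
  set L := (d + √(d ^ 2 + 4 * (1 + d - p))) / 2
  obtain ⟨hL0, hL⟩ := root_eq_one_add_sub_div (L := L) (by linarith) rfl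
  have ha_nonneg := nonneg_of_eq_one_add_sub_div hp.le (by linarith) (by linarith) ha
  have hB : 2 * p * L * ψ / (1 + L - p) * (1 + L) =
      p * (2 * L * ψ + 2 * p * L * ψ / (1 + L - p)) := by
    have h1Lp : 0 < 1 + L - p := by linarith
    field_simp
    ring
  exact tendsto_of_eq_mul_add_div hp.le hp1 ha_nonneg
    (tendsto_of_eq_one_add_sub_div hp.le hp1 ha_nonneg ha hL0.le hL) hL0.le hb hB

theorem stmt_5 (d p ψ : ℝ) (hd : 0 < d) (hp : 0 < p) (hp1 : p < 1) (hψ : 0 < ψ)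
    (a b : ℕ → ℝ) (ha0 : a 0 = 1 + d)
    (ha : ∀ i, a (i + 1) = 1 + d - p / (1 + a i))
    (hb0 : b 0 = 0)
    (hb : ∀ i, b (i + 1) = p * (2 * a i * ψ + b i) / (1 + a i)) :
    Filter.Tendsto b Filter.atTop
      (nhds (2 * p * ((d + Real.sqrt (d ^ 2 + 4 * (1 + d - p))) / 2) * ψ /
        (1 + (d + Real.sqrt (d ^ 2 + 4 * (1 + d - p))) / 2 - p))) :=
  stmt_5_general d p ψ hd hp hp1 a b ha0 ha hb
end

section
/- The sequence b_i satisfies b_i ≤ 2p(1+d)ψ/(1−p) for all i ≥ 0, where b_0 = 0 and b_{i+1} = p(2 a_i ψ + b_i)/(1+a_i) with a_i ≤ 1+d. -/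
/-! With `M = 2p(1+d)ψ/(1-p)` we have `2paψ ≤ (1-p)M` whenever `a ≤ 1+d`, so one step of the
recurrence maps `b ≤ M` to at most `(p·2aψ + pM)/(1+a) ≤ M/(1+a) ≤ M`; induct from `b₀ = 0 ≤ M`. -/

theorem recurrence_step_le {p ψ a x M : ℝ} (hp : 0 ≤ p) (ha : 0 ≤ a) (hxM : x ≤ M)
    (hM : 0 ≤ M) (hgain : 2 * a * ψ * p ≤ (1 - p) * M) :
    p * (2 * a * ψ + x) / (1 + a) ≤ M := by
  rw [div_le_iff₀ (by linarith)]
  calc p * (2 * a * ψ + x) ≤ 2 * a * ψ * p + p * M := by nlinarith [mul_le_mul_of_nonneg_left hxM hp]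
    _ ≤ M := by linarith
    _ ≤ M * (1 + a) := by nlinarith

theorem stmt_6_general (d p ψ : ℝ) (hp : 0 < p) (hp1 : p < 1) (hψ : 0 < ψ)
    (a b : ℕ → ℝ) (ha : ∀ i, 0 < a i ∧ a i ≤ 1 + d)
    (hb0 : b 0 = 0)
    (hb : ∀ i, b (i + 1) = p * (2 * a i * ψ + b i) / (1 + a i)) :
    ∀ i, b i ≤ 2 * p * (1 + d) * ψ / (1 - p) := by
  set M := 2 * p * (1 + d) * ψ / (1 - p)
  have h1p : 0 < 1 - p := by linarith
  have hd : 0 < 1 + d := (ha 0).1.trans_le (ha 0).2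
  have hM : 0 ≤ M := by positivity
  have hgain (i : ℕ) : 2 * a i * ψ * p ≤ (1 - p) * M := by
    rw [mul_div_cancel₀ _ h1p.ne']
    have := mul_le_mul_of_nonneg_right (ha i).2 (mul_pos hψ hp).le
    linarith
  intro i
  induction i with
  | zero => rw [hb0]; exact hM
  | succ n ih => rw [hb n]; exact recurrence_step_le hp.le (ha n).1.le ih hM (hgain n)

theorem stmt_6 (d p ψ : ℝ) (hd : 0 < d) (hp : 0 < p) (hp1 : p < 1) (hψ : 0 < ψ)
    (a b : ℕ → ℝ) (ha : ∀ i, 0 < a i ∧ a i ≤ 1 + d)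
    (hb0 : b 0 = 0)
    (hb : ∀ i, b (i + 1) = p * (2 * a i * ψ + b i) / (1 + a i)) :
    ∀ i, b i ≤ 2 * p * (1 + d) * ψ / (1 - p) :=
  stmt_6_general d p ψ hp hp1 hψ a b ha hb0 hb
end

section
/- For all x ∈ [0, ψ] and all i ≥ 0, the quantity (x + ψ − b_i/2)/(1 + a_i) lies strictly between 0 and ψ, where a_i, b_i are defined by a_0 = 1+d, a_{i+1} = 1+d − p/(1+a_i), b_0 = 0, b_{i+1} = p(2 a_i ψ + b_i)/(1+a_i). -/
/-!
Since `a i > d > 0` and `p < 1`, the denominators stay above `1`. The numerator is positive as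
long as `b i < 2ψ`, which propagates because `b (i+1)` is `p` times a convex combination of `2ψ`
and `b i`. The upper bound amounts to `c i := ψ (a i - 1) + b i / 2 > 0`, and `c` satisfies the
linear recurrence `c (i+1) = ψ d + p c i / (1 + a i)` with `c 0 = ψ d`.
-/

theorem lt_of_eq_one_add_sub_div {d p : ℝ} {a : ℕ → ℝ} (hd : 0 ≤ d) (hp1 : p < 1)
    (ha0 : a 0 = 1 + d) (ha : ∀ i, a (i + 1) = 1 + d - p / (1 + a i)) (i : ℕ) : d < a i := by
  induction i with
  | zero => rw [ha0]; linarith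
  | succ i ih =>
    have hdiv : p / (1 + a i) < 1 := (div_lt_one (by linarith)).2 (by linarith)
    rw [ha]; linarith

theorem lt_two_mul_of_eq_mul_div {p ψ : ℝ} {a b : ℕ → ℝ} (hp : 0 ≤ p) (hp1 : p ≤ 1)
    (hψ : 0 < ψ) (ha : ∀ i, 0 < 1 + a i) (hb0 : b 0 = 0)
    (hb : ∀ i, b (i + 1) = p * (2 * a i * ψ + b i) / (1 + a i)) (i : ℕ) : b i < 2 * ψ := by
  induction i with
  | zero => rw [hb0]; linarith
  | succ i ih =>
    have hconv : (2 * a i * ψ + b i) / (1 + a i) < 2 * ψ := by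
      rw [div_lt_iff₀ (ha i)]; linarith
    rw [hb, mul_div_assoc]
    rcases le_or_gt ((2 * a i * ψ + b i) / (1 + a i)) 0 with hnonpos | hpos <;> nlinarith

theorem mul_sub_one_add_half_succ {d p ψ : ℝ} {a b : ℕ → ℝ} (i : ℕ) (ha1 : 1 + a i ≠ 0)
    (ha : a (i + 1) = 1 + d - p / (1 + a i))
    (hb : b (i + 1) = p * (2 * a i * ψ + b i) / (1 + a i)) :
    ψ * (a (i + 1) - 1) + b (i + 1) / 2 = ψ * d + p * (ψ * (a i - 1) + b i / 2) / (1 + a i) := by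
  rw [ha, hb]
  field_simp
  ring

theorem mul_sub_one_add_half_pos {d p ψ : ℝ} {a b : ℕ → ℝ} (hd : 0 < d) (hp : 0 ≤ p)
    (hψ : 0 < ψ) (ha1 : ∀ i, 0 < 1 + a i) (ha0 : a 0 = 1 + d)
    (ha : ∀ i, a (i + 1) = 1 + d - p / (1 + a i)) (hb0 : b 0 = 0)
    (hb : ∀ i, b (i + 1) = p * (2 * a i * ψ + b i) / (1 + a i)) (i : ℕ) :
    0 < ψ * (a i - 1) + b i / 2 := by
  induction i with
  | zero => rw [ha0, hb0]; simpa using mul_pos hψ hd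
  | succ i ih =>
    rw [mul_sub_one_add_half_succ i (ha1 i).ne' (ha i) (hb i)]
    have : 0 ≤ p * (ψ * (a i - 1) + b i / 2) / (1 + a i) :=
      div_nonneg (mul_nonneg hp ih.le) (ha1 i).le
    linarith [mul_pos hψ hd]

theorem div_one_add_mem_Ioo {a b ψ x : ℝ} (ha : 0 < 1 + a) (hb : b < 2 * ψ)
    (hc : 0 < ψ * (a - 1) + b / 2) (hx : x ∈ Set.Icc 0 ψ) :
    (x + ψ - b / 2) / (1 + a) ∈ Set.Ioo 0 ψ := by
  obtain ⟨hx0, hxψ⟩ := hx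
  constructor
  · exact div_pos (by linarith) ha
  · rw [div_lt_iff₀ ha]; linarith

theorem stmt_7 (d p ψ : ℝ) (hd : 0 < d) (hp : 0 < p) (hp1 : p < 1) (hψ : 0 < ψ)
    (a b : ℕ → ℝ) (ha0 : a 0 = 1 + d)
    (ha : ∀ i, a (i + 1) = 1 + d - p / (1 + a i))
    (hb0 : b 0 = 0)
    (hb : ∀ i, b (i + 1) = p * (2 * a i * ψ + b i) / (1 + a i)) :
    ∀ x ∈ Set.Icc (0 : ℝ) ψ, ∀ i,
      0 < (x + ψ - b i / 2) / (1 + a i) ∧ (x + ψ - b i / 2) / (1 + a i) < ψ := by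
  have ha1 : ∀ i, 0 < 1 + a i := fun i => by
    linarith [lt_of_eq_one_add_sub_div hd.le hp1 ha0 ha i]
  intro x hx i
  exact div_one_add_mem_Ioo (ha1 i)
    (lt_two_mul_of_eq_mul_div hp.le hp1.le hψ ha1 hb0 hb i)
    (mul_sub_one_add_half_pos hd hp.le hψ ha1 ha0 ha hb0 hb i) hx
end

section
/- The optimal policy π*(x) = (x + ψ − b_∞/2)/(1 + a_∞), with a_∞ = (d + sqrt(d^2+4(1+d−p)))/2 and b_∞ = 2 p a_∞ ψ/(1 + a_∞ − p), satisfies 0 < π*(x) < ψ for all x ∈ [0, ψ]. -/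
/-!
Write `a = a_∞`, the positive root of `a² = d a + (1 + d - p)`, and `b = b_∞`. Since
`1 + a - p > p a` (equivalently `(1 - p)(1 + a) > 0`), we get `b / 2 < ψ`, which gives `π* > 0`.
For `π* < ψ` it suffices that `ψ - b / 2 < a ψ`, i.e. `(1 - a)(1 + a - p) < p a`, i.e. `1 - p < a²`,
which holds because `a² = 1 - p + d (1 + a)`.
-/

open Real Set

lemma half_add_sqrt_sq (d c : ℝ) (h : 0 ≤ d ^ 2 + 4 * c) :
    ((d + √(d ^ 2 + 4 * c)) / 2) ^ 2 = d * ((d + √(d ^ 2 + 4 * c)) / 2) + c := by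
  have hs := sq_sqrt h
  linear_combination hs / 4

section Policy

variable {a p ψ : ℝ}

lemma half_gain_lt (ha : 0 < a) (hp1 : p < 1) (hψ : 0 < ψ) :
    2 * p * a * ψ / (1 + a - p) / 2 < ψ := by
  have hden : 0 < 1 + a - p := by linarith
  rw [div_lt_iff₀ two_pos, div_lt_iff₀ hden]
  nlinarith [mul_pos (mul_pos hψ (by linarith : (0 : ℝ) < 1 + a)) (sub_pos.2 hp1)]

lemma sub_half_gain_lt (ha : 0 < a) (hp1 : p < 1) (ha2 : 1 - p < a ^ 2) (hψ : 0 < ψ) :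
    ψ - 2 * p * a * ψ / (1 + a - p) / 2 < ψ * a := by
  have hden : 0 < 1 + a - p := by linarith
  have key : ψ * (1 - a) * (1 + a - p) < p * a * ψ := by nlinarith [mul_pos hψ (sub_pos.2 ha2)]
  have : ψ * (1 - a) < 2 * p * a * ψ / (1 + a - p) / 2 := by
    rw [lt_div_iff₀ two_pos, lt_div_iff₀ hden]
    linarith
  linarith

lemma policy_mem_Ioo (ha : 0 < a) (hp1 : p < 1) (ha2 : 1 - p < a ^ 2) (hψ : 0 < ψ)
    {x : ℝ} (hx : x ∈ Icc 0 ψ) :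
    0 < (x + ψ - 2 * p * a * ψ / (1 + a - p) / 2) / (1 + a) ∧
      (x + ψ - 2 * p * a * ψ / (1 + a - p) / 2) / (1 + a) < ψ := by
  have h1a : 0 < 1 + a := by linarith
  have hlow := half_gain_lt ha hp1 hψ
  have hup := sub_half_gain_lt ha hp1 ha2 hψ
  refine ⟨div_pos (by linarith [hx.1]) h1a, ?_⟩
  rw [div_lt_iff₀ h1a]
  linarith [hx.2]

end Policy

theorem stmt_9_general (d p ψ : ℝ) (hd : 0 < d) (hp1 : p < 1) (hψ : 0 < ψ) :
    ∀ x ∈ Set.Icc (0 : ℝ) ψ,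
      0 < (x + ψ - (2 * p * ((d + Real.sqrt (d ^ 2 + 4 * (1 + d - p))) / 2) * ψ /
            (1 + (d + Real.sqrt (d ^ 2 + 4 * (1 + d - p))) / 2 - p)) / 2) /
          (1 + (d + Real.sqrt (d ^ 2 + 4 * (1 + d - p))) / 2) ∧
      (x + ψ - (2 * p * ((d + Real.sqrt (d ^ 2 + 4 * (1 + d - p))) / 2) * ψ /
            (1 + (d + Real.sqrt (d ^ 2 + 4 * (1 + d - p))) / 2 - p)) / 2) /
          (1 + (d + Real.sqrt (d ^ 2 + 4 * (1 + d - p))) / 2) < ψ := by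
  intro x hx
  have hdisc : 0 ≤ d ^ 2 + 4 * (1 + d - p) := by nlinarith
  have hsq := half_add_sqrt_sq d (1 + d - p) hdisc
  set a := (d + √(d ^ 2 + 4 * (1 + d - p))) / 2
  have ha : 0 < a := by positivity
  exact policy_mem_Ioo ha hp1 (by nlinarith) hψ hx

theorem stmt_9 (d p ψ : ℝ) (hd : 0 < d) (hp : 0 < p) (hp1 : p < 1) (hψ : 0 < ψ) :
    ∀ x ∈ Set.Icc (0 : ℝ) ψ,
      0 < (x + ψ - (2 * p * ((d + Real.sqrt (d ^ 2 + 4 * (1 + d - p))) / 2) * ψ /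
            (1 + (d + Real.sqrt (d ^ 2 + 4 * (1 + d - p))) / 2 - p)) / 2) /
          (1 + (d + Real.sqrt (d ^ 2 + 4 * (1 + d - p))) / 2) ∧
      (x + ψ - (2 * p * ((d + Real.sqrt (d ^ 2 + 4 * (1 + d - p))) / 2) * ψ /
            (1 + (d + Real.sqrt (d ^ 2 + 4 * (1 + d - p))) / 2 - p)) / 2) /
          (1 + (d + Real.sqrt (d ^ 2 + 4 * (1 + d - p))) / 2) < ψ :=
  stmt_9_general d p ψ hd hp1 hψ
end

section
/- With a'_{-1}=0, b'_{-1}=0, a'_{k+1}=1/(4+2d−2p a'_k), b'_{k+1}=((2−p)ψ + p b'_k)/(4+2d−2p a'_k), the sequence b'_k converges to b'_∞ = a'_∞ (2−p) ψ / (1 − a'_∞ p), where a'_∞ = (4+2d)/(4p) − sqrt((2+d)^2−2p)/(2p). -/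
/-!
`L = a'_∞` is the attracting fixed point of `x ↦ 1 / (4 + 2d - 2px)`: the iterates stay below `L`
and `a'_{k+1} - L = 2pL a'_{k+1} (a'_k - L)` with `2pL² < 1`. For the second sequence,
`κ (a'_k - 1/2)` with `κ = 2(2 - p)ψ / (p - 2 - 2d)` is a particular solution of the recursion of
`b'`, so `h_k = b'_k - κ (a'_k - 1/2)` satisfies `h_{k+1} = p a'_{k+1} h_k` with `p a'_{k+1} ≤ pL < 1`.
Hence `b'_k → κ (L - 1/2)`, which the fixed-point equation of `L` turns into `L (2 - p)ψ / (1 - pL)`.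
-/

open Filter Topology

theorem tendsto_of_dist_le_mul_dist {α : Type*} [PseudoMetricSpace α] {u : ℕ → α} {x : α}
    {r : ℝ} (hr₀ : 0 ≤ r) (hr₁ : r < 1) (hu : ∀ n, dist (u (n + 1)) x ≤ r * dist (u n) x) :
    Tendsto u atTop (𝓝 x) := by
  have hgeom : ∀ n, dist (u n) x ≤ dist (u 0) x * r ^ n := by
    intro n
    induction n with
    | zero => simp
    | succ n ih =>
      calc dist (u (n + 1)) x ≤ r * dist (u n) x := hu n
        _ ≤ r * (dist (u 0) x * r ^ n) := by gcongr
        _ = dist (u 0) x * r ^ (n + 1) := by ring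
  rw [tendsto_iff_dist_tendsto_zero]
  refine squeeze_zero (fun n => dist_nonneg) hgeom ?_
  simpa using (tendsto_pow_atTop_nhds_zero_of_lt_one hr₀ hr₁).const_mul (dist (u 0) x)

theorem tendsto_of_sub_eq_mul_sub {u θ : ℕ → ℝ} {x r : ℝ} (hr : r < 1) (hθ : ∀ n, |θ n| ≤ r)
    (hu : ∀ n, u (n + 1) - x = θ n * (u n - x)) : Tendsto u atTop (𝓝 x) :=
  tendsto_of_dist_le_mul_dist ((abs_nonneg _).trans (hθ 0)) hr fun n => by
    rw [Real.dist_eq, Real.dist_eq, hu, abs_mul]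
    exact mul_le_mul_of_nonneg_right (hθ n) (abs_nonneg _)

noncomputable def aInf (d p : ℝ) : ℝ :=
  (4 + 2 * d) / (4 * p) - Real.sqrt ((2 + d) ^ 2 - 2 * p) / (2 * p)

section aInf

variable {d p : ℝ}

theorem abs_lt_sqrt_disc (hpd : p < 2 + 2 * d) : |d| < Real.sqrt ((2 + d) ^ 2 - 2 * p) := by
  rw [Real.lt_sqrt (abs_nonneg d), sq_abs]
  linarith

theorem two_mul_mul_aInf (hp : 0 < p) :
    2 * p * aInf d p = 2 + d - Real.sqrt ((2 + d) ^ 2 - 2 * p) := by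
  unfold aInf
  field_simp
  ring

theorem aInf_mul_add_sqrt (hp : 0 < p) (hpd : p < 2 + 2 * d) :
    aInf d p * (2 + d + Real.sqrt ((2 + d) ^ 2 - 2 * p)) = 1 := by
  have hsq : Real.sqrt ((2 + d) ^ 2 - 2 * p) ^ 2 = (2 + d) ^ 2 - 2 * p :=
    Real.sq_sqrt (by nlinarith [sq_nonneg d])
  refine mul_left_cancel₀ (mul_ne_zero two_ne_zero hp.ne') ?_
  linear_combination (2 + d + Real.sqrt ((2 + d) ^ 2 - 2 * p)) * two_mul_mul_aInf (d := d) hp - hsq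

theorem aInf_pos (hp : 0 < p) (hpd : p < 2 + 2 * d) : 0 < aInf d p := by
  have h := aInf_mul_add_sqrt hp hpd
  nlinarith [abs_lt_sqrt_disc hpd, neg_abs_le d]

theorem aInf_mul_sub_eq_one (hp : 0 < p) (hpd : p < 2 + 2 * d) :
    aInf d p * (4 + 2 * d - 2 * p * aInf d p) = 1 := by
  rw [two_mul_mul_aInf hp, ← aInf_mul_add_sqrt hp hpd]
  ring

theorem mul_aInf_lt_one (hp : 0 < p) (hpd : p < 2 + 2 * d) : p * aInf d p < 1 := by
  linarith [two_mul_mul_aInf (d := d) hp, abs_lt_sqrt_disc hpd, le_abs_self d]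

theorem two_mul_mul_aInf_sq_lt_one (hp : 0 < p) (hpd : p < 2 + 2 * d) :
    2 * p * aInf d p ^ 2 < 1 := by
  have hL := aInf_pos hp hpd
  nlinarith [two_mul_mul_aInf (d := d) hp, aInf_mul_add_sqrt hp hpd,
    (abs_nonneg d).trans_lt (abs_lt_sqrt_disc hpd)]

theorem sub_two_mul_pos_of_le_aInf (hp : 0 < p) (hpd : p < 2 + 2 * d) {x : ℝ}
    (hx : x ≤ aInf d p) : 0 < 4 + 2 * d - 2 * p * x := by
  nlinarith [mul_aInf_lt_one hp hpd]

end aInf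

section recursion

variable {d p c : ℝ} {a b : ℕ → ℝ}

theorem le_aInf_of_recursion (hp : 0 < p) (hpd : p < 2 + 2 * d) (ha0 : a 0 ≤ aInf d p)
    (ha : ∀ k, a (k + 1) = 1 / (4 + 2 * d - 2 * p * a k)) : ∀ k, a k ≤ aInf d p := by
  intro k
  induction k with
  | zero => exact ha0
  | succ k ih =>
    have hL := aInf_mul_sub_eq_one hp hpd
    have hden := sub_two_mul_pos_of_le_aInf hp hpd le_rfl
    calc a (k + 1) = 1 / (4 + 2 * d - 2 * p * a k) := ha k
      _ ≤ 1 / (4 + 2 * d - 2 * p * aInf d p) := by gcongr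
      _ = aInf d p := (eq_one_div_of_mul_eq_one_left hL).symm

theorem pos_succ_of_recursion (hp : 0 < p) (hpd : p < 2 + 2 * d) (ha0 : a 0 ≤ aInf d p)
    (ha : ∀ k, a (k + 1) = 1 / (4 + 2 * d - 2 * p * a k)) (k : ℕ) : 0 < a (k + 1) := by
  rw [ha k]
  exact one_div_pos.2 (sub_two_mul_pos_of_le_aInf hp hpd (le_aInf_of_recursion hp hpd ha0 ha k))

theorem succ_mul_sub_eq_one_of_recursion (hp : 0 < p) (hpd : p < 2 + 2 * d)
    (ha0 : a 0 ≤ aInf d p) (ha : ∀ k, a (k + 1) = 1 / (4 + 2 * d - 2 * p * a k)) (k : ℕ) :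
    a (k + 1) * (4 + 2 * d - 2 * p * a k) = 1 := by
  rw [ha k, one_div_mul_cancel
    (sub_two_mul_pos_of_le_aInf hp hpd (le_aInf_of_recursion hp hpd ha0 ha k)).ne']

theorem tendsto_aInf_of_recursion (hp : 0 < p) (hpd : p < 2 + 2 * d) (ha0 : a 0 ≤ aInf d p)
    (ha : ∀ k, a (k + 1) = 1 / (4 + 2 * d - 2 * p * a k)) :
    Tendsto a atTop (𝓝 (aInf d p)) := by
  have hL := aInf_mul_sub_eq_one hp hpd
  have hLpos := aInf_pos hp hpd
  refine tendsto_of_sub_eq_mul_sub (two_mul_mul_aInf_sq_lt_one hp hpd)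
    (θ := fun k => 2 * p * aInf d p * a (k + 1)) (fun k => ?_) (fun k => ?_)
  · have hpos := pos_succ_of_recursion hp hpd ha0 ha k
    rw [abs_of_pos (by positivity), sq, ← mul_assoc]
    exact mul_le_mul_of_nonneg_left (le_aInf_of_recursion hp hpd ha0 ha (k + 1)) (by positivity)
  · linear_combination
      aInf d p * succ_mul_sub_eq_one_of_recursion hp hpd ha0 ha k - a (k + 1) * hL

theorem tendsto_aInf_mul_div_of_recursion (hp : 0 < p) (hpd : p < 2 + 2 * d)
    (ha0 : a 0 ≤ aInf d p)
    (ha : ∀ k, a (k + 1) = 1 / (4 + 2 * d - 2 * p * a k))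
    (hb : ∀ k, b (k + 1) = (c + p * b k) / (4 + 2 * d - 2 * p * a k)) :
    Tendsto b atTop (𝓝 (aInf d p * c / (1 - aInf d p * p))) := by
  set L := aInf d p
  obtain ⟨κ, hκ⟩ : ∃ κ, κ * (p - 2 - 2 * d) = 2 * c :=
    ⟨2 * c / (p - 2 - 2 * d), div_mul_cancel₀ _ (by linarith)⟩
  have hh : Tendsto (fun k => b k - κ * (a k - 1 / 2)) atTop (𝓝 0) := by
    refine tendsto_of_sub_eq_mul_sub (mul_aInf_lt_one hp hpd) (θ := fun k => p * a (k + 1))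
      (fun k => ?_) (fun k => ?_)
    · rw [abs_of_pos (mul_pos hp (pos_succ_of_recursion hp hpd ha0 ha k))]
      exact mul_le_mul_of_nonneg_left (le_aInf_of_recursion hp hpd ha0 ha (k + 1)) hp.le
    · have hak := succ_mul_sub_eq_one_of_recursion hp hpd ha0 ha k
      have hbk : b (k + 1) = (c + p * b k) * a (k + 1) := by
        rw [hb k, ha k, div_eq_mul_one_div]
      rw [hbk]
      linear_combination -(κ / 2) * hak - a (k + 1) / 2 * hκ
  have hlim : κ * (L - 1 / 2) = L * c / (1 - L * p) := by
    have hpL := mul_aInf_lt_one hp hpd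
    rw [eq_div_iff (by nlinarith)]
    linear_combination (κ / 2) * aInf_mul_sub_eq_one hp hpd + L / 2 * hκ
  have := hh.add (((tendsto_aInf_of_recursion hp hpd ha0 ha).sub_const (1 / 2)).const_mul κ)
  rw [zero_add, hlim] at this
  simpa only [sub_add_cancel] using this

end recursion

theorem stmt_13_general (d p ψ : ℝ) (hd : 0 < d) (hp : 0 < p) (hp1 : p ≤ 1)
    (a b : ℕ → ℝ) (ha0 : a 0 = 0)
    (ha : ∀ k, a (k + 1) = 1 / (4 + 2 * d - 2 * p * a k))
    (hb : ∀ k, b (k + 1) = ((2 - p) * ψ + p * b k) / (4 + 2 * d - 2 * p * a k)) :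
    Filter.Tendsto b Filter.atTop
      (nhds (((4 + 2 * d) / (4 * p) - Real.sqrt ((2 + d) ^ 2 - 2 * p) / (2 * p)) *
          (2 - p) * ψ /
        (1 - ((4 + 2 * d) / (4 * p) - Real.sqrt ((2 + d) ^ 2 - 2 * p) / (2 * p)) * p))) := by
  have hpd : p < 2 + 2 * d := by linarith
  have hb_lim := tendsto_aInf_mul_div_of_recursion hp hpd (ha0 ▸ (aInf_pos hp hpd).le) ha hb
  rwa [← mul_assoc] at hb_lim

/-- `a k`, `b k` represent `a'_{k-1}`, `b'_{k-1}` of the paper. -/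
theorem stmt_13 (d p ψ : ℝ) (hd : 0 < d) (hp : 0 < p) (hp1 : p ≤ 1) (hψ : 0 < ψ)
    (a b : ℕ → ℝ) (ha0 : a 0 = 0) (hb0 : b 0 = 0)
    (ha : ∀ k, a (k + 1) = 1 / (4 + 2 * d - 2 * p * a k))
    (hb : ∀ k, b (k + 1) = ((2 - p) * ψ + p * b k) / (4 + 2 * d - 2 * p * a k)) :
    Filter.Tendsto b Filter.atTop
      (nhds (((4 + 2 * d) / (4 * p) - Real.sqrt ((2 + d) ^ 2 - 2 * p) / (2 * p)) *
          (2 - p) * ψ /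
        (1 - ((4 + 2 * d) / (4 * p) - Real.sqrt ((2 + d) ^ 2 - 2 * p) / (2 * p)) * p))) :=
  stmt_13_general d p ψ hd hp hp1 a b ha0 ha hb
end

section
/- For all k ≥ 0 and all x ∈ [0, ψ], the affine function a'_k x + b'_k satisfies 0 < a'_k x + b'_k < ψ, where a'_k, b'_k are defined by a'_{-1}=0, b'_{-1}=0, a'_k = 1/(4+2d−2p a'_{k−1}), b'_k = ((2−p)ψ + p b'_{k−1})/(4+2d−2p a'_{k−1}). -/
/-!
The pair `(a'_k, b'_k)` stays in the region `a ≤ 1/2`, `0 ≤ b`, `a ψ + b ≤ ψ`. On that region the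
common denominator `4 + 2d - 2p a` is at least `3`, and one step of the recursion lands strictly
inside: the new intercept gains `(2 - p) ψ > 0`, while the new value at `ψ` is
`((3 - p) ψ + p b) / (4 + 2d - 2p a)`, whose numerator falls short of `ψ` times the denominator.
-/

section AffineRecursion

variable {d p ψ a b a' b' : ℝ}

lemma three_le_denom (hd : 0 ≤ d) (hp : 0 ≤ p) (hp1 : p ≤ 1) (ha : a ≤ 1 / 2) :
    3 ≤ 4 + 2 * d - 2 * p * a := by
  nlinarith

lemma recursion_step_bounds (hd : 0 ≤ d) (hp : 0 ≤ p) (hp1 : p ≤ 1) (hψ : 0 < ψ)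
    (ha : a ≤ 1 / 2) (hb0 : 0 ≤ b) (habψ : a * ψ + b ≤ ψ)
    (ha' : a' = 1 / (4 + 2 * d - 2 * p * a))
    (hb' : b' = ((2 - p) * ψ + p * b) / (4 + 2 * d - 2 * p * a)) :
    0 < a' ∧ a' ≤ 1 / 2 ∧ 0 < b' ∧ a' * ψ + b' < ψ := by
  have hD : 3 ≤ 4 + 2 * d - 2 * p * a := three_le_denom hd hp hp1 ha
  have hD0 : 0 < 4 + 2 * d - 2 * p * a := by linarith
  have hvalue : a' * ψ + b' = ((3 - p) * ψ + p * b) / (4 + 2 * d - 2 * p * a) := by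
    rw [ha', hb']
    field_simp
    ring
  refine ⟨?_, ?_, ?_, ?_⟩
  · rw [ha']
    positivity
  · rw [ha', div_le_iff₀ hD0]
    linarith
  · rw [hb']
    apply div_pos _ hD0
    nlinarith
  · rw [hvalue, div_lt_iff₀ hD0]
    nlinarith

lemma affine_mem_Ioo_of_mem_Icc {x : ℝ} (ha : 0 ≤ a) (hb : 0 < b) (habψ : a * ψ + b < ψ)
    (hx : x ∈ Set.Icc 0 ψ) : 0 < a * x + b ∧ a * x + b < ψ := by
  obtain ⟨hx0, hxψ⟩ := hx
  constructor <;> nlinarith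

end AffineRecursion

/-- `a k`, `b k` represent `a'_{k-1}`, `b'_{k-1}` of the paper; the claim is for
paper indices `k ≥ 0`, i.e. Lean indices `k ≥ 1`. -/
theorem stmt_14 (d p ψ : ℝ) (hd : 0 < d) (hp : 0 < p) (hp1 : p ≤ 1) (hψ : 0 < ψ)
    (a b : ℕ → ℝ) (ha0 : a 0 = 0) (hb0 : b 0 = 0)
    (ha : ∀ k, a (k + 1) = 1 / (4 + 2 * d - 2 * p * a k))
    (hb : ∀ k, b (k + 1) = ((2 - p) * ψ + p * b k) / (4 + 2 * d - 2 * p * a k)) :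
    ∀ k ≥ 1, ∀ x ∈ Set.Icc (0 : ℝ) ψ,
      0 < a k * x + b k ∧ a k * x + b k < ψ := by
  have step (k : ℕ) (hk : a k ≤ 1 / 2 ∧ 0 ≤ b k ∧ a k * ψ + b k ≤ ψ) :=
    recursion_step_bounds hd.le hp.le hp1 hψ hk.1 hk.2.1 hk.2.2 (ha k) (hb k)
  have invariant (k : ℕ) : a k ≤ 1 / 2 ∧ 0 ≤ b k ∧ a k * ψ + b k ≤ ψ := by
    induction k with
    | zero => simp only [ha0, hb0]; norm_num [hψ.le]
    | succ k ih =>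
      obtain ⟨-, ha_le, hb_pos, hlt⟩ := step k ih
      exact ⟨ha_le, hb_pos.le, hlt.le⟩
  intro k hk x hx
  obtain ⟨m, rfl⟩ := Nat.exists_eq_add_of_le' hk
  obtain ⟨ha_pos, -, hb_pos, hlt⟩ := step m (invariant m)
  exact affine_mem_Ioo_of_mem_Icc ha_pos.le hb_pos hlt hx
end

section
/- If a'_k ψ + b'_k < ψ and a'_k < (1+2d)/p, then a'_{k+1} ψ + b'_{k+1} < ψ, where a'_{k+1} = 1/(2(2+d − p a'_k)) and b'_{k+1} = ((2−p)ψ + p b'_k)/(2(2+d − p a'_k)). -/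
theorem stmt_15_general (d p ψ ak bk : ℝ) (hp : 0 < p)
    (hψ : 0 < ψ)
    (hpos : 0 < 2 + d - p * ak)
    (hak : ak < (1 + 2 * d) / p)
    (hyp : ak * ψ + bk < ψ) :
    (1 / (2 * (2 + d - p * ak))) * ψ +
      ((2 - p) * ψ + p * bk) / (2 * (2 + d - p * ak)) < ψ := by
  have hpak : p * ak < 1 + 2 * d := by rwa [lt_div_iff₀ hp, mul_comm] at hak
  rw [one_div, inv_mul_eq_div, ← add_div, div_lt_iff₀ (by linarith)]
  -- after clearing the denominator the goal is the sum of these two inequalities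
  linarith [mul_lt_mul_of_pos_left hyp hp, mul_lt_mul_of_pos_right hpak hψ]

theorem stmt_15 (d p ψ ak bk : ℝ) (hd : 0 < d) (hp : 0 < p) (hp1 : p ≤ 1)
    (hψ : 0 < ψ) (hak0 : 0 ≤ ak) (hbk : 0 ≤ bk)
    (hpos : 0 < 2 + d - p * ak)
    (hak : ak < (1 + 2 * d) / p)
    (hyp : ak * ψ + bk < ψ) :
    (1 / (2 * (2 + d - p * ak))) * ψ +
      ((2 - p) * ψ + p * bk) / (2 * (2 + d - p * ak)) < ψ :=
  stmt_15_general d p ψ ak bk hp hψ hpos hak hyp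
end
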